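/- Let f: ℝ^k → ℝ be square-integrable under N(0, I_k) with Hermite coefficients c_α, and for θ ∈ ℝ^k define ∇̄f(θ) := E_{Z∼N(0,I_k)}[∇f(Z + θ)]. Then the i-th component satisfies ∇̄f(θ)_i = ∑_{α∈ℕ^k} √(α_i+1) c_{α(i)} ∏_{j∈[k]} θ_j^{α_j}/√(α_j!). -/

import Mathlib

/-!
Differentiating `f = ∑ c_α H_α` term by term, `He_n' = n He_{n-1}` gives `∂ᵢ H_α = √αᵢ H_{α-eᵢ}`.
The Gaussian density factorizes over the coordinates, so `E[H_β(Z + θ)]` is a product of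
one-dimensional expectations `E[He_n(Z + t)] = tⁿ`, and these follow by induction from the
recursion `He_{n+1} = X He_n - He_n'` together with Gaussian integration by parts
`E[q'(Z)] = E[Z q(Z)]`. Hence `E[∂ᵢ f(Z + θ)] = ∑_α c_α √αᵢ θ^{α-eᵢ}/√(α-eᵢ)!`, and the shift
`α = β + eᵢ` turns this into the stated series.
-/

open MeasureTheory Polynomial

/-- Standard Gaussian measure `N(0, I_k)` on `ℝ^k`. -/
noncomputable def stdGauss (k : ℕ) : Measure (EuclideanSpace ℝ (Fin k)) :=
  volume.withDensity fun x =>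
    ENNReal.ofReal ((2 * Real.pi) ^ (-(k : ℝ) / 2) * Real.exp (-‖x‖ ^ 2 / 2))

/-- Normalized multivariate (probabilists') Hermite polynomial `H_α(z) = ∏_j H_{α_j}(z_j)/√(α_j!)`. -/
noncomputable def hermiteBasis {k : ℕ} (α : Fin k → ℕ) (z : EuclideanSpace ℝ (Fin k)) : ℝ :=
  ∏ j, (Polynomial.aeval (z j) (Polynomial.hermite (α j))) / Real.sqrt (Nat.factorial (α j))

open Real Finset Function
open scoped Nat

theorem integrable_pow_mul_exp_neg_sq_div_two (n : ℕ) :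
    Integrable fun x : ℝ => x ^ n * exp (-x ^ 2 / 2) := by
  refine (integrable_rpow_mul_exp_neg_mul_sq (b := 1 / 2) (by norm_num)
    (neg_one_lt_zero.trans_le n.cast_nonneg)).congr (.of_forall fun x => ?_)
  simp only [rpow_natCast]
  ring_nf

theorem integrable_eval_mul_exp_neg_sq_div_two (q : ℝ[X]) :
    Integrable fun x : ℝ => q.eval x * exp (-x ^ 2 / 2) := by
  induction q using Polynomial.induction_on' with
  | add p q hp hq =>
    simp only [eval_add, add_mul]
    exact hp.add hq
  | monomial n a =>
    simpa [mul_assoc] using (integrable_pow_mul_exp_neg_sq_div_two n).const_mul a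

theorem integrable_eval_add_mul_exp_neg_sq_div_two (q : ℝ[X]) (t : ℝ) :
    Integrable fun x : ℝ => q.eval (x + t) * exp (-x ^ 2 / 2) := by
  have h := integrable_eval_mul_exp_neg_sq_div_two (q.comp (X + C t))
  simp only [eval_comp] at h
  simpa only [eval_add, eval_X, eval_C] using h

theorem integral_derivative_eval_mul_exp_neg_sq_div_two (q : ℝ[X]) :
    ∫ x : ℝ, (derivative q).eval x * exp (-x ^ 2 / 2)
      = ∫ x : ℝ, (X * q).eval x * exp (-x ^ 2 / 2) := by
  have hexp (x : ℝ) : HasDerivAt (fun x => exp (-x ^ 2 / 2)) (-x * exp (-x ^ 2 / 2)) x := by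
    convert (((hasDerivAt_id' x).fun_pow 2).fun_neg.div_const 2).exp using 1
    ring
  have hint := integrable_eval_mul_exp_neg_sq_div_two
  have hibp := integral_mul_deriv_eq_deriv_mul_of_integrable (u := fun x => q.eval x)
    (fun x _ => q.hasDerivAt x) (fun x _ => hexp x)
    ((hint (-(X * q))).congr (.of_forall fun x => by simp; ring)) (hint _) (hint q)
  rw [eq_comm, ← neg_eq_iff_eq_neg.mpr hibp, ← integral_neg]
  congr 1 with x
  simp only [eval_mul, eval_X]
  ring

noncomputable def hermiteReal (n : ℕ) : ℝ[X] := (hermite n).map (algebraMap ℤ ℝ)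

theorem eval_hermiteReal (n : ℕ) (x : ℝ) : (hermiteReal n).eval x = aeval x (hermite n) :=
  eval_map_algebraMap _ _

theorem hermiteReal_succ (n : ℕ) :
    hermiteReal (n + 1) = X * hermiteReal n - derivative (hermiteReal n) := by
  simp [hermiteReal, hermite_succ, derivative_map]

theorem derivative_hermite_succ (n : ℕ) :
    derivative (hermite (n + 1)) = C ((n : ℤ) + 1) * hermite n := by
  induction n with
  | zero => simp
  | succ n ih =>
    rw [hermite_succ (n + 1), derivative_sub, derivative_mul, derivative_X, ih, derivative_C_mul]
    push_cast [map_add, map_one]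
    linear_combination (-(C (n : ℤ)) - 1) * hermite_succ n

theorem derivative_hermiteReal_succ (n : ℕ) :
    derivative (hermiteReal (n + 1)) = C ((n : ℝ) + 1) * hermiteReal n := by
  rw [hermiteReal, derivative_map, derivative_hermite_succ]
  simp [hermiteReal]

theorem integral_hermiteReal_eval_add_mul_exp_neg_sq_div_two (n : ℕ) (t : ℝ) :
    ∫ x : ℝ, (hermiteReal n).eval (x + t) * exp (-x ^ 2 / 2) = t ^ n * √(2 * π) := by
  induction n with
  | zero =>
    have := integral_gaussian (1 / 2)
    rw [show π / (1 / 2) = 2 * π by ring] at this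
    simp only [hermiteReal, hermite_zero, eval_map, map_one, eval₂_one, one_mul, pow_zero, ← this]
    congr 1 with x
    ring_nf
  | succ n ih =>
    set q := (hermiteReal n).comp (X + C t)
    have hq (x : ℝ) : (hermiteReal (n + 1)).eval (x + t)
        = (X * q).eval x + t * q.eval x - (derivative q).eval x := by
      simp [q, hermiteReal_succ, derivative_comp]
      ring
    have hint := integrable_eval_mul_exp_neg_sq_div_two
    simp_rw [hq, sub_mul, add_mul, mul_assoc]
    rw [integral_sub, integral_add, integral_const_mul,
      ← integral_derivative_eval_mul_exp_neg_sq_div_two]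
    · simp only [q, eval_comp, eval_add, eval_X, eval_C, ih]
      ring
    · exact hint _
    · exact (hint q).const_mul t
    · exact (hint _).add ((hint q).const_mul t)
    · exact hint _

noncomputable def normalizedHermite (n : ℕ) : ℝ[X] := C (√n !)⁻¹ * hermiteReal n

theorem derivative_normalizedHermite (n : ℕ) :
    derivative (normalizedHermite n) = C √n * normalizedHermite (n - 1) := by
  cases n with
  | zero => simp [normalizedHermite, hermiteReal]
  | succ m =>
    simp only [normalizedHermite, derivative_C_mul, derivative_hermiteReal_succ, ← mul_assoc,
      ← C_mul, add_tsub_cancel_right]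
    congr 2
    have hfac : (√(m + 1)! : ℝ) = √(m + 1) * √m ! := by
      rw [Nat.factorial_succ, Nat.cast_mul, sqrt_mul (by positivity)]
      push_cast
      ring
    rw [hfac]
    field_simp
    push_cast
    exact (mul_self_sqrt (by positivity)).symm

theorem fderiv_prod_apply_single {ι : Type*} [Fintype ι] [DecidableEq ι] {g : ι → ℝ → ℝ}
    {x : EuclideanSpace ℝ ι} (hg : ∀ j, DifferentiableAt ℝ (g j) (x j)) (i : ι) :
    fderiv ℝ (fun z : EuclideanSpace ℝ ι => ∏ j, g j (z j)) x (EuclideanSpace.single i 1)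
      = deriv (g i) (x i) * ∏ j ∈ univ.erase i, g j (x j) := by
  have hcoord (j : ι) : HasFDerivAt (fun z : EuclideanSpace ℝ ι => g j (z j))
      (deriv (g j) (x j) • EuclideanSpace.proj j) x :=
    (hg j).hasDerivAt.comp_hasFDerivAt x (EuclideanSpace.proj (𝕜 := ℝ) j).hasFDerivAt
  rw [(HasFDerivAt.finsetProd fun j _ => hcoord j).fderiv, _root_.sum_apply,
    Fintype.sum_eq_single i]
  · simp [mul_comm]
  · intro j hj
    simp [hj]

theorem gradient_apply_eq_fderiv_single {ι : Type*} [Fintype ι] [DecidableEq ι]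
    (f : EuclideanSpace ℝ ι → ℝ) (x : EuclideanSpace ℝ ι) (i : ι) :
    gradient f x i = fderiv ℝ f x (EuclideanSpace.single i 1) := by
  rw [gradient, ← InnerProductSpace.toDual_symm_apply, EuclideanSpace.inner_single_right]
  simp

theorem integral_euclideanSpace_prod {ι : Type*} [Fintype ι] (F : ι → ℝ → ℝ) :
    ∫ z : EuclideanSpace ℝ ι, ∏ j, F j (z j) = ∏ j, ∫ x, F j x := by
  rw [← integral_fintype_prod_volume_eq_prod,
    ← (EuclideanSpace.volume_preserving_symm_measurableEquiv_toLp ι).integral_comp']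
  rfl

theorem integrable_euclideanSpace_prod {ι : Type*} [Fintype ι] {F : ι → ℝ → ℝ}
    (hF : ∀ j, Integrable (F j)) :
    Integrable fun z : EuclideanSpace ℝ ι => ∏ j, F j (z j) :=
  ((EuclideanSpace.volume_preserving_symm_measurableEquiv_toLp ι).integrable_comp_emb
    (MeasurableEquiv.measurableEmbedding _)).2 (Integrable.fintype_prod hF)

theorem integral_withDensity_ofReal {α : Type*} [MeasurableSpace α] {μ : Measure α} {ρ : α → ℝ}
    (hρ : Measurable ρ) (hρ0 : ∀ x, 0 ≤ ρ x) (g : α → ℝ) :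
    ∫ x, g x ∂μ.withDensity (fun x => ENNReal.ofReal (ρ x)) = ∫ x, ρ x * g x ∂μ := by
  rw [integral_withDensity_eq_integral_toReal_smul hρ.ennreal_ofReal
    (.of_forall fun _ => ENNReal.ofReal_lt_top)]
  simp only [ENNReal.toReal_ofReal (hρ0 _), smul_eq_mul]

theorem integrable_withDensity_ofReal_iff {α : Type*} [MeasurableSpace α] {μ : Measure α}
    {ρ : α → ℝ} (hρ : Measurable ρ) (hρ0 : ∀ x, 0 ≤ ρ x) {g : α → ℝ} :
    Integrable g (μ.withDensity fun x => ENNReal.ofReal (ρ x))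
      ↔ Integrable (fun x => ρ x * g x) μ := by
  rw [integrable_withDensity_iff hρ.ennreal_ofReal (.of_forall fun _ => ENNReal.ofReal_lt_top)]
  simp only [ENNReal.toReal_ofReal (hρ0 _), mul_comm]

theorem stdGauss_eq_withDensity_prod (k : ℕ) :
    stdGauss k = volume.withDensity fun z =>
      ENNReal.ofReal (∏ j, (√(2 * π))⁻¹ * exp (-z j ^ 2 / 2)) := by
  have hdensity (z : EuclideanSpace ℝ (Fin k)) :
      (2 * π) ^ (-(k : ℝ) / 2) * exp (-‖z‖ ^ 2 / 2) = ∏ j, (√(2 * π))⁻¹ * exp (-z j ^ 2 / 2) := by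
    rw [prod_mul_distrib, prod_const, card_univ, Fintype.card_fin, ← exp_sum,
      EuclideanSpace.norm_sq_eq, sqrt_eq_rpow, ← rpow_neg (by positivity), ← rpow_natCast,
      ← rpow_mul (by positivity)]
    congr 2
    · ring
    · simp [sum_div, neg_div]
  simp only [stdGauss, hdensity]

theorem integral_stdGauss_prod {k : ℕ} (F : Fin k → ℝ → ℝ) :
    ∫ z, ∏ j, F j (z j) ∂stdGauss k = ∏ j, (√(2 * π))⁻¹ * ∫ x, F j x * exp (-x ^ 2 / 2) := by
  rw [stdGauss_eq_withDensity_prod, integral_withDensity_ofReal (by fun_prop)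
    (fun _ => prod_nonneg fun _ _ => by positivity)]
  simp_rw [← prod_mul_distrib]
  rw [integral_euclideanSpace_prod (fun j x => (√(2 * π))⁻¹ * exp (-x ^ 2 / 2) * F j x)]
  refine prod_congr rfl fun j _ => ?_
  rw [← integral_const_mul]
  congr 1 with x
  ring

theorem integrable_stdGauss_prod {k : ℕ} {F : Fin k → ℝ → ℝ}
    (hF : ∀ j, Integrable fun x => F j x * exp (-x ^ 2 / 2)) :
    Integrable (fun z => ∏ j, F j (z j)) (stdGauss k) := by
  rw [stdGauss_eq_withDensity_prod, integrable_withDensity_ofReal_iff (by fun_prop)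
    (fun _ => prod_nonneg fun _ _ => by positivity)]
  simp_rw [← prod_mul_distrib]
  exact integrable_euclideanSpace_prod (F := fun j x => (√(2 * π))⁻¹ * exp (-x ^ 2 / 2) * F j x)
    fun j => ((hF j).const_mul (√(2 * π))⁻¹).congr (.of_forall fun x => by ring)

section HermiteBasis

variable {k : ℕ}

theorem hermiteBasis_eq_prod (α : Fin k → ℕ) :
    hermiteBasis α = fun z => ∏ j, (normalizedHermite (α j)).eval (z j) := by
  ext z
  simp [hermiteBasis, normalizedHermite, eval_hermiteReal, div_eq_inv_mul]

theorem integral_hermiteBasis_add (β : Fin k → ℕ) (θ : EuclideanSpace ℝ (Fin k)) :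
    ∫ z, hermiteBasis β (z + θ) ∂stdGauss k = ∏ j, θ j ^ β j / √(β j)! := by
  simp only [hermiteBasis_eq_prod, PiLp.add_apply]
  rw [integral_stdGauss_prod fun j x => (normalizedHermite (β j)).eval (x + θ j)]
  refine prod_congr rfl fun j _ => ?_
  simp only [normalizedHermite, eval_mul, eval_C, mul_assoc, integral_const_mul,
    integral_hermiteReal_eval_add_mul_exp_neg_sq_div_two]
  field_simp

theorem integrable_hermiteBasis_add (β : Fin k → ℕ) (θ : EuclideanSpace ℝ (Fin k)) :
    Integrable (fun z => hermiteBasis β (z + θ)) (stdGauss k) := by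
  simp only [hermiteBasis_eq_prod, PiLp.add_apply]
  exact integrable_stdGauss_prod (F := fun j x => (normalizedHermite (β j)).eval (x + θ j))
    fun j => integrable_eval_add_mul_exp_neg_sq_div_two _ (θ j)

theorem differentiable_hermiteBasis (α : Fin k → ℕ) : Differentiable ℝ (hermiteBasis α) := by
  rw [hermiteBasis_eq_prod]
  fun_prop

/-- For `α i = 0` the truncated `α i - 1` is harmless: both sides vanish. -/
theorem fderiv_hermiteBasis_apply_single (α : Fin k → ℕ)
    (z : EuclideanSpace ℝ (Fin k)) (i : Fin k) :
    fderiv ℝ (hermiteBasis α) z (EuclideanSpace.single i 1)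
      = √(α i) * hermiteBasis (update α i (α i - 1)) z := by
  simp only [hermiteBasis_eq_prod]
  rw [fderiv_prod_apply_single fun j => (normalizedHermite (α j)).differentiableAt, Polynomial.deriv,
    derivative_normalizedHermite, ← mul_prod_erase univ _ (mem_univ i)]
  simp only [update_self, eval_mul, eval_C, mul_assoc]
  congr 2
  exact prod_congr rfl fun j hj => by rw [update_of_ne (ne_of_mem_erase hj)]

theorem gradient_apply_of_eq_sum_hermiteBasis {f : EuclideanSpace ℝ (Fin k) → ℝ}
    {s : Finset (Fin k → ℕ)} {c : (Fin k → ℕ) → ℝ}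
    (hf : ∀ z, f z = ∑ α ∈ s, c α * hermiteBasis α z) (z : EuclideanSpace ℝ (Fin k)) (i : Fin k) :
    gradient f z i = ∑ α ∈ s, c α * (√(α i) * hermiteBasis (update α i (α i - 1)) z) := by
  classical
  obtain rfl : f = fun z => ∑ α ∈ s, c α * hermiteBasis α z := funext hf
  rw [gradient_apply_eq_fderiv_single,
    fderiv_fun_sum fun α _ => ((differentiable_hermiteBasis α).const_mul (c α)).differentiableAt,
    _root_.sum_apply]
  refine sum_congr rfl fun α _ => ?_
  rw [fderiv_const_mul (differentiable_hermiteBasis α).differentiableAt,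
    _root_.smul_apply, fderiv_hermiteBasis_apply_single, smul_eq_mul]

end HermiteBasis

theorem finsum_comp_update_add_one {ι M : Type*} [DecidableEq ι] [AddCommMonoid M] (i : ι)
    {T : (ι → ℕ) → M} (hT : ∀ α, α i = 0 → T α = 0) :
    ∑ᶠ β, T (update β i (β i + 1)) = ∑ᶠ α, T α := by
  set e : (ι → ℕ) → ι → ℕ := fun β => update β i (β i + 1)
  have hinv (β : ι → ℕ) : update (e β) i (e β i - 1) = β := by simp [e]
  have he : Injective e := LeftInverse.injective (g := fun α => update α i (α i - 1)) hinv
  have hsupp : support T ∩ Set.range e = support T := by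
    refine Set.inter_eq_left.2 fun α hα => ⟨update α i (α i - 1), ?_⟩
    have : α i ≠ 0 := fun h => hα (hT α h)
    simp [e, Nat.sub_add_cancel (Nat.one_le_iff_ne_zero.2 this)]
  rw [← finsum_mem_range (f := T) he, ← finsum_mem_inter_support, Set.inter_comm, hsupp,
    finsum_mem_support]

theorem smoothed_gradient_series_general {k : ℕ} (c : (Fin k → ℕ) →₀ ℝ)
    (f : EuclideanSpace ℝ (Fin k) → ℝ)
    (hf : ∀ z, f z = ∑ α ∈ c.support, c α * hermiteBasis α z)
    (θ : EuclideanSpace ℝ (Fin k)) (i : Fin k) :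
    (∫ z, gradient f (z + θ) ∂(stdGauss k)) i
      = ∑ᶠ α : Fin k → ℕ, Real.sqrt ((α i : ℝ) + 1)
          * c (Function.update α i (α i + 1))
          * ∏ j, θ j ^ (α j) / Real.sqrt (Nat.factorial (α j)) := by
  have hterm (j : Fin k) (α : Fin k → ℕ) : Integrable (fun z =>
      c α * (√(α j) * hermiteBasis (update α j (α j - 1)) (z + θ))) (stdGauss k) :=
    ((integrable_hermiteBasis_add _ θ).const_mul _).const_mul _
  set T : (Fin k → ℕ) → ℝ := fun α =>
    c α * (√(α i) * ∏ j, θ j ^ update α i (α i - 1) j / √(update α i (α i - 1) j)!)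
  calc (∫ z, gradient f (z + θ) ∂stdGauss k) i
      = ∫ z, gradient f (z + θ) i ∂stdGauss k := by
        refine eval_integral_piLp (fun j => ?_) i
        simp_rw [gradient_apply_of_eq_sum_hermiteBasis hf]
        exact integrable_finsetSum _ fun α _ => hterm j α
    _ = ∑ α ∈ c.support, T α := by
        simp_rw [gradient_apply_of_eq_sum_hermiteBasis hf]
        rw [integral_finsetSum _ fun α _ => hterm i α]
        simp only [integral_const_mul, integral_hermiteBasis_add, T]
    _ = ∑ᶠ α, T α := (finsum_eq_sum_of_support_subset T fun α hα => by
        simpa using fun h : c α = 0 => hα (by simp [T, h])).symm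
    _ = ∑ᶠ β, T (update β i (β i + 1)) :=
        (finsum_comp_update_add_one i fun α h => by simp [T, h]).symm
    _ = _ := finsum_congr fun β => by simp [T]; ring

/-- **Gaussian-smoothed gradient as a power series in `θ`.**  If `f = ∑_α c_α H_α` and
`∇̄f(θ) := E_{Z∼N(0,I_k)}[∇f(Z + θ)]`, then
`∇̄f(θ)_i = ∑_α √(α_i+1) c_{α(i)} ∏_j θ_j^{α_j}/√(α_j!)`. -/
theorem smoothed_gradient_series {k : ℕ} (c : (Fin k → ℕ) →₀ ℝ)
    (f : EuclideanSpace ℝ (Fin k) → ℝ)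
    (hf : ∀ z, f z = ∑ α ∈ c.support, c α * hermiteBasis α z)
    (hL2 : Integrable (fun z => f z ^ 2) (stdGauss k))
    (hint : ∀ θ : EuclideanSpace ℝ (Fin k),
      Integrable (fun z => gradient f (z + θ)) (stdGauss k))
    (θ : EuclideanSpace ℝ (Fin k)) (i : Fin k) :
    (∫ z, gradient f (z + θ) ∂(stdGauss k)) i
      = ∑ᶠ α : Fin k → ℕ, Real.sqrt ((α i : ℝ) + 1)
          * c (Function.update α i (α i + 1))
          * ∏ j, θ j ^ (α j) / Real.sqrt (Nat.factorial (α j)) :=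
  smoothed_gradient_series_general c f hf θ i
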